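/- Let E be a nonempty collection of dyadic intervals with Carleson constant ⟦E⟧ = sup_{I∈E} (1/|I|) ∑_{J∈E, J⊆I} |J| < ∞. For I ∈ E and ℓ ≥ 0 let G_ℓ(I,E) be the ℓ-th generation of E∩{J⊆I} (G_0 = maximal intervals, G_{n} = maximal intervals of the remainder). Then |G_ℓ^*(I,E)| ≤ 4·2^{−2ℓ/(4⟦E⟧+1)}|I|, where G_ℓ^*(I,E) is the union of the intervals in G_ℓ(I,E). -/

import Mathlib

open MeasureTheory

/-- Dyadic intervals of `[0,1)`: level `n` and position `k < 2^n`. -/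
abbrev DyadicI : Type := (n : ℕ) × Fin (2 ^ n)

/-- The subinterval of `[0,1)` corresponding to a dyadic index. -/
noncomputable def dySet (I : DyadicI) : Set ℝ :=
  Set.Ico ((I.2 : ℝ) / 2 ^ I.1) (((I.2 : ℝ) + 1) / 2 ^ I.1)

/-- Length `|I| = 2^{-n}` of a dyadic interval. -/
noncomputable def dyLen (I : DyadicI) : ℝ := ((2 : ℝ) ^ I.1)⁻¹

/-- The `L^∞`-normalized Haar function of `I`. -/
noncomputable def haar (I : DyadicI) (t : ℝ) : ℝ :=
  (Set.Ico ((I.2 : ℝ) / 2 ^ I.1) (((I.2 : ℝ) + 1 / 2) / 2 ^ I.1)).indicator 1 t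
    - (Set.Ico (((I.2 : ℝ) + 1 / 2) / 2 ^ I.1) (((I.2 : ℝ) + 1) / 2 ^ I.1)).indicator 1 t

/-- Square function `S(f)(t) = (∑_I x_I² 1_I(t))^{1/2}`. -/
noncomputable def sqF (x : DyadicI → ℝ) (t : ℝ) : ℝ :=
  Real.sqrt (∑' I : DyadicI, (x I) ^ 2 * (dySet I).indicator 1 t)

/-- The dyadic Hardy space (quasi-)norm `‖f‖_{H^p} = ‖S(f)‖_{L^p[0,1]}`. -/
noncomputable def hpNorm (p : ℝ) (x : DyadicI → ℝ) : ℝ :=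
  (∫ t in Set.Ioo (0 : ℝ) 1, sqF x t ^ p) ^ (1 / p)

/-- `‖f‖_{L²}² = ∑_I x_I² |I|`. -/
noncomputable def l2Norm (x : DyadicI → ℝ) : ℝ :=
  Real.sqrt (∑' I : DyadicI, (x I) ^ 2 * dyLen I)

/-- Sup norm of the square function. -/
noncomputable def supSqF (x : DyadicI → ℝ) : ℝ := ⨆ t : ℝ, sqF x t

/-- Restriction of the coefficient sequence to a block `G ⊆ D`. -/
noncomputable def restr (G : Set DyadicI) (x : DyadicI → ℝ) : DyadicI → ℝ :=
  G.indicator x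

/-- Maximal intervals of a collection of dyadic intervals. -/
def maximalIn (L : Set DyadicI) : Set DyadicI :=
  {I | I ∈ L ∧ ∀ J ∈ L, dySet I ⊆ dySet J → I = J}

/-- Consecutive generations of a collection of dyadic intervals:
`gen 0 L` are the maximal intervals of `L`, and the `(n+1)`-st generation is obtained by
removing the maximal intervals and taking generations of the remainder. -/
def gen : ℕ → Set DyadicI → Set DyadicI
  | 0, L => maximalIn L
  | n + 1, L => gen n (L \ maximalIn L)

/-!
Every point of `G_{k+m}^*` lies in a unique `J ∈ G_k`, and the chain of parents of its
generation-`(k+m)` interval gives `m + 1` intervals of the collection between that point and `J`.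
Integrating this count over `J` and using the Carleson packing condition gives
`(m + 1) |G_{k+m}^* ∩ J| ≤ C |J|`; summing over the disjoint `J ∈ G_k` and taking `m = ⌊2C⌋`
halves the measure every `m` generations. Hence `|G_ℓ^*| ≤ 2^{-⌊ℓ/m⌋} |I|`, which is the claimed
bound because `m ≤ 2C < (4C + 1)/2`.
-/

open scoped ENNReal

theorem mem_dySet_iff {I : DyadicI} {t : ℝ} :
    t ∈ dySet I ↔ 0 ≤ t ∧ ⌊t * 2 ^ I.1⌋₊ = I.2 := by
  have h2 : (0 : ℝ) < 2 ^ I.1 := by positivity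
  rw [dySet, Set.mem_Ico, div_le_iff₀ h2, lt_div_iff₀ h2]
  constructor
  · rintro ⟨hle, hlt⟩
    have ht : 0 ≤ t := nonneg_of_mul_nonneg_left ((Nat.cast_nonneg _).trans hle) h2
    exact ⟨ht, (Nat.floor_eq_iff (by positivity)).2 ⟨hle, hlt⟩⟩
  · rintro ⟨ht, hfloor⟩
    exact (Nat.floor_eq_iff (by positivity)).1 hfloor

theorem dySet_nonempty (I : DyadicI) : (dySet I).Nonempty :=
  Set.nonempty_Ico.2 (div_lt_div_of_pos_right (lt_add_one _) (by positivity))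

theorem dyLen_pos (I : DyadicI) : 0 < dyLen I := by
  rw [dyLen]
  positivity

theorem volume_dySet (I : DyadicI) : volume (dySet I) = ENNReal.ofReal (dyLen I) := by
  rw [dySet, Real.volume_Ico, dyLen, ← sub_div, add_sub_cancel_left, one_div]

theorem eq_of_mem_dySet_of_fst_eq {I J : DyadicI} {t : ℝ} (hI : t ∈ dySet I) (hJ : t ∈ dySet J)
    (h : I.1 = J.1) : I = J := by
  obtain ⟨n, k⟩ := I
  obtain ⟨m, k'⟩ := J
  obtain rfl : n = m := h
  rw [mem_dySet_iff] at hI hJ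
  exact Sigma.ext rfl (heq_of_eq (Fin.ext (hI.2.symm.trans hJ.2)))

theorem fst_le_of_dySet_subset {I J : DyadicI} (h : dySet I ⊆ dySet J) : J.1 ≤ I.1 := by
  have hvol := measure_mono (μ := volume) h
  rw [volume_dySet, volume_dySet, ENNReal.ofReal_le_ofReal_iff (dyLen_pos J).le,
    dyLen, dyLen, inv_le_inv₀ (by positivity) (by positivity)] at hvol
  exact (pow_le_pow_iff_right₀ one_lt_two).1 hvol

theorem dySet_injective : Function.Injective dySet := fun I _ h =>
  eq_of_mem_dySet_of_fst_eq (dySet_nonempty I).some_mem (h ▸ (dySet_nonempty I).some_mem)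
    (le_antisymm (fst_le_of_dySet_subset h.ge) (fst_le_of_dySet_subset h.le))

theorem floor_mul_two_pow_of_le (s : ℝ) {m n : ℕ} (h : m ≤ n) :
    ⌊s * 2 ^ m⌋₊ = ⌊s * 2 ^ n⌋₊ / 2 ^ (n - m) := by
  have hpow : (2 : ℝ) ^ n / 2 ^ (n - m) = 2 ^ m := by
    rw [div_eq_iff (by positivity), ← pow_add, Nat.add_sub_cancel' h]
  rw [← Nat.floor_div_natCast, Nat.cast_pow, Nat.cast_ofNat, mul_div_assoc, hpow]

theorem dySet_subset_of_mem_of_fst_le {I J : DyadicI} {t : ℝ} (hI : t ∈ dySet I)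
    (hJ : t ∈ dySet J) (h : J.1 ≤ I.1) : dySet I ⊆ dySet J := by
  intro s hs
  rw [mem_dySet_iff] at hI hJ hs ⊢
  refine ⟨hs.1, ?_⟩
  rw [floor_mul_two_pow_of_le s h, hs.2, ← hI.2, ← floor_mul_two_pow_of_le t h, hJ.2]

theorem dySet_subset_or_subset_of_mem {I J : DyadicI} {t : ℝ} (hI : t ∈ dySet I)
    (hJ : t ∈ dySet J) : dySet I ⊆ dySet J ∨ dySet J ⊆ dySet I :=
  (le_total J.1 I.1).imp (dySet_subset_of_mem_of_fst_le hI hJ)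
    (dySet_subset_of_mem_of_fst_le hJ hI)

theorem tsum_volume_dySet_le_of_tsum_dyLen_le {ι : Type*} {f : ι → DyadicI} {C : ℝ} (hC : 0 ≤ C)
    {J : DyadicI} (hf : Summable fun i => dyLen (f i)) (h : ∑' i, dyLen (f i) ≤ C * dyLen J) :
    ∑' i, volume (dySet (f i)) ≤ ENNReal.ofReal C * volume (dySet J) :=
  calc ∑' i, volume (dySet (f i)) = ∑' i, ENNReal.ofReal (dyLen (f i)) :=
        tsum_congr fun i => volume_dySet (f i)
    _ = ENNReal.ofReal (∑' i, dyLen (f i)) :=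
        (ENNReal.ofReal_tsum_of_nonneg (fun i => (dyLen_pos (f i)).le) hf).symm
    _ ≤ ENNReal.ofReal (C * dyLen J) := ENNReal.ofReal_le_ofReal h
    _ = ENNReal.ofReal C * volume (dySet J) := by rw [ENNReal.ofReal_mul hC, volume_dySet]

section Generations

variable {L : Set DyadicI}

theorem maximalIn_subset (L : Set DyadicI) : maximalIn L ⊆ L := fun _ h => h.1

theorem pairwiseDisjoint_maximalIn (L : Set DyadicI) : (maximalIn L).PairwiseDisjoint dySet := by
  intro I hI J hJ hIJ
  refine Set.disjoint_left.2 fun t htI htJ => hIJ ?_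
  rcases dySet_subset_or_subset_of_mem htI htJ with h | h
  · exact hI.2 J hJ.1 h
  · exact (hJ.2 I hI.1 h).symm

theorem exists_mem_maximalIn_superset {J : DyadicI} (hJ : J ∈ L) :
    ∃ M ∈ maximalIn L, dySet J ⊆ dySet M := by
  obtain ⟨M, ⟨hML, hJM⟩, hmin⟩ := (InvImage.wf Sigma.fst wellFounded_lt).has_min
    {K | K ∈ L ∧ dySet J ⊆ dySet K} ⟨J, hJ, subset_rfl⟩
  refine ⟨M, ⟨hML, fun K hK hMK => ?_⟩, hJM⟩
  have hlevel : M.1 = K.1 := le_antisymm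
    (not_lt.1 (hmin K ⟨hK, hJM.trans hMK⟩)) (fst_le_of_dySet_subset hMK)
  obtain ⟨t, ht⟩ := dySet_nonempty M
  exact eq_of_mem_dySet_of_fst_eq ht (hMK ht) hlevel

theorem exists_gen_eq_maximalIn (n : ℕ) (L : Set DyadicI) :
    ∃ L' ⊆ L, gen n L = maximalIn L' := by
  induction n generalizing L with
  | zero => exact ⟨L, subset_rfl, rfl⟩
  | succ n ih =>
    obtain ⟨L', hL', h⟩ := ih (L \ maximalIn L)
    exact ⟨L', hL'.trans Set.sdiff_subset, h⟩

theorem gen_subset (n : ℕ) (L : Set DyadicI) : gen n L ⊆ L := by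
  obtain ⟨L', hL', h⟩ := exists_gen_eq_maximalIn n L
  exact h ▸ (maximalIn_subset L').trans hL'

theorem pairwiseDisjoint_gen (n : ℕ) (L : Set DyadicI) : (gen n L).PairwiseDisjoint dySet := by
  obtain ⟨L', -, h⟩ := exists_gen_eq_maximalIn n L
  exact h ▸ pairwiseDisjoint_maximalIn L'

theorem exists_gen_ssuperset {n : ℕ} {K : DyadicI} (hK : K ∈ gen (n + 1) L) :
    ∃ J ∈ gen n L, dySet K ⊂ dySet J := by
  induction n generalizing L with
  | zero =>
    obtain ⟨⟨hKL, hKmax⟩, -⟩ := hK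
    obtain ⟨M, hM, hKM⟩ := exists_mem_maximalIn_superset hKL
    exact ⟨M, hM, hKM.ssubset_of_ne fun h => hKmax (dySet_injective h ▸ hM)⟩
  | succ n ih => exact ih hK

theorem exists_gen_superset_encard_le {k m : ℕ} {K : DyadicI} (hK : K ∈ gen (k + m) L) :
    ∃ J ∈ gen k L, dySet K ⊆ dySet J ∧
      (m + 1 : ℕ∞) ≤ {K' | K' ∈ L ∧ dySet K ⊆ dySet K' ∧ dySet K' ⊆ dySet J}.encard := by
  induction m generalizing K with
  | zero =>
    refine ⟨K, hK, subset_rfl, ?_⟩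
    rw [Nat.cast_zero, zero_add, Set.one_le_encard_iff_nonempty]
    exact ⟨K, gen_subset _ L hK, subset_rfl, subset_rfl⟩
  | succ m ih =>
    obtain ⟨K', hK', hKK'⟩ := exists_gen_ssuperset hK
    obtain ⟨J, hJ, hK'J, hcard⟩ := ih hK'
    refine ⟨J, hJ, hKK'.subset.trans hK'J, ?_⟩
    have hKnot : K ∉ {K'' | K'' ∈ L ∧ dySet K' ⊆ dySet K'' ∧ dySet K'' ⊆ dySet J} :=
      fun h => hKK'.not_subset h.2.1
    calc (↑(m + 1) + 1 : ℕ∞)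
        ≤ (insert K {K'' | K'' ∈ L ∧ dySet K' ⊆ dySet K'' ∧ dySet K'' ⊆ dySet J}).encard := by
          rw [Set.encard_insert_of_notMem hKnot]; push_cast; gcongr
      _ ≤ _ := by
          refine Set.encard_le_encard (Set.insert_subset ?_ fun K'' h => ?_)
          · exact ⟨gen_subset _ L hK, subset_rfl, hKK'.subset.trans hK'J⟩
          · exact ⟨h.1, hKK'.subset.trans h.2.1, h.2.2⟩

end Generations

theorem mul_measure_le_tsum_measure_of_le_encard {α ι : Type*} [MeasurableSpace α]
    [Countable ι] (μ : Measure α) {s : ι → Set α} (hs : ∀ i, MeasurableSet (s i)) {S : Set α}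
    {c : ℕ∞} (h : ∀ x ∈ S, c ≤ {i | x ∈ s i}.encard) : c * μ S ≤ ∑' i, μ (s i) := by
  set f : α → ℝ≥0∞ := fun x => ∑' i, (s i).indicator 1 x
  have hf : ∀ x, f x = {i | x ∈ s i}.encard := fun x => by
    rw [← ENNReal.tsum_set_one, tsum_subtype _ fun _ => (1 : ℝ≥0∞)]
    rfl
  calc (c : ℝ≥0∞) * μ S ≤ c * μ {x | (c : ℝ≥0∞) ≤ f x} := by
        gcongr
        intro x hx
        show (c : ℝ≥0∞) ≤ f x
        rw [hf]
        exact_mod_cast h x hx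
    _ ≤ ∫⁻ x, f x ∂μ :=
        mul_meas_ge_le_lintegral₀ (by fun_prop (disch := exact hs _)) _
    _ = ∑' i, μ (s i) := by
        rw [lintegral_tsum fun i => (measurable_one.indicator (hs i)).aemeasurable]
        exact tsum_congr fun i => lintegral_indicator_one (hs i)

/-- The paper's `G_n^*(L)`. -/
def genUnion (n : ℕ) (L : Set DyadicI) : Set ℝ := ⋃ J ∈ gen n L, dySet J

section GenerationUnion

variable {E L : Set DyadicI}

theorem genUnion_add_subset (k m : ℕ) (L : Set DyadicI) : genUnion (k + m) L ⊆ genUnion k L := by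
  intro t ht
  obtain ⟨K, hK, htK⟩ := Set.mem_iUnion₂.1 ht
  obtain ⟨J, hJ, hKJ, -⟩ := exists_gen_superset_encard_le hK
  exact Set.mem_iUnion₂.2 ⟨J, hJ, hKJ htK⟩

theorem genUnion_subset_dySet {I : DyadicI} (hL : ∀ J ∈ L, dySet J ⊆ dySet I) (n : ℕ) :
    genUnion n L ⊆ dySet I :=
  Set.iUnion₂_subset fun J hJ => hL J (gen_subset n L hJ)

theorem volume_genUnion (n : ℕ) (L : Set DyadicI) :
    volume (genUnion n L) = ∑' J : gen n L, volume (dySet J) :=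
  measure_biUnion (Set.to_countable _) (pairwiseDisjoint_gen n L) fun _ _ => measurableSet_Ico

theorem add_one_mul_volume_genUnion_inter_le (hLE : L ⊆ E) {k m : ℕ} {J : DyadicI}
    (hJ : J ∈ gen k L) :
    (m + 1 : ℝ≥0∞) * volume (genUnion (k + m) L ∩ dySet J) ≤
      ∑' K : {K : DyadicI // K ∈ E ∧ dySet K ⊆ dySet J}, volume (dySet K.1) := by
  have hcount := mul_measure_le_tsum_measure_of_le_encard volume
    (s := fun K : {K : DyadicI // K ∈ E ∧ dySet K ⊆ dySet J} => dySet K.1)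
    (fun _ => measurableSet_Ico) (S := genUnion (k + m) L ∩ dySet J) (c := m + 1) ?_
  · exact_mod_cast hcount
  rintro t ⟨ht, htJ⟩
  obtain ⟨K, hK, htK⟩ := Set.mem_iUnion₂.1 ht
  obtain ⟨J', hJ', hKJ', hcard⟩ := exists_gen_superset_encard_le hK
  obtain rfl : J' = J := by_contra fun hne =>
    Set.disjoint_left.1 (pairwiseDisjoint_gen k L hJ' hJ hne) (hKJ' htK) htJ
  refine hcard.trans ?_
  rw [← Subtype.val_injective.encard_image]
  refine Set.encard_le_encard fun K' hK' => ?_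
  exact ⟨⟨K', hLE hK'.1, hK'.2.2⟩, hK'.2.1 htK, rfl⟩

theorem add_one_mul_volume_genUnion_le (hLE : L ⊆ E) {C : ℝ≥0∞}
    (hC : ∀ J ∈ L, ∑' K : {K : DyadicI // K ∈ E ∧ dySet K ⊆ dySet J}, volume (dySet K.1) ≤
      C * volume (dySet J)) (k m : ℕ) :
    (m + 1 : ℝ≥0∞) * volume (genUnion (k + m) L) ≤ C * volume (genUnion k L) := by
  have hcover : genUnion (k + m) L ⊆ ⋃ J ∈ gen k L, genUnion (k + m) L ∩ dySet J := by
    rw [← Set.inter_iUnion₂]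
    exact Set.subset_inter subset_rfl (genUnion_add_subset k m L)
  calc (m + 1 : ℝ≥0∞) * volume (genUnion (k + m) L)
      ≤ (m + 1) * ∑' J : gen k L, volume (genUnion (k + m) L ∩ dySet J) := by
        gcongr
        exact (measure_mono hcover).trans (measure_biUnion_le _ (gen k L).to_countable _)
    _ = ∑' J : gen k L, (m + 1) * volume (genUnion (k + m) L ∩ dySet J) :=
        ENNReal.tsum_mul_left.symm
    _ ≤ ∑' J : gen k L, C * volume (dySet J) := ENNReal.tsum_le_tsum fun J =>
        (add_one_mul_volume_genUnion_inter_le hLE J.2).trans (hC J (gen_subset k L J.2))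
    _ = C * volume (genUnion k L) := by rw [ENNReal.tsum_mul_left, volume_genUnion]

theorem two_pow_mul_volume_genUnion_le (hLE : L ⊆ E) {C : ℝ≥0∞}
    (hC : ∀ J ∈ L, ∑' K : {K : DyadicI // K ∈ E ∧ dySet K ⊆ dySet J}, volume (dySet K.1) ≤
      C * volume (dySet J)) {m : ℕ} (hm : 2 * C ≤ m + 1) (ℓ : ℕ) :
    2 ^ (ℓ / m) * volume (genUnion ℓ L) ≤ volume (genUnion 0 L) := by
  have hhalf : ∀ k, 2 * volume (genUnion (k + m) L) ≤ volume (genUnion k L) := fun k => by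
    refine (ENNReal.mul_le_mul_iff_right (Nat.cast_add_one_ne_zero m) (by simp)).1 ?_
    calc (m + 1 : ℝ≥0∞) * (2 * volume (genUnion (k + m) L))
        = 2 * ((m + 1) * volume (genUnion (k + m) L)) := by ring
      _ ≤ 2 * (C * volume (genUnion k L)) :=
          mul_le_mul_right (add_one_mul_volume_genUnion_le hLE hC k m) 2
      _ ≤ (m + 1) * volume (genUnion k L) := by rw [← mul_assoc]; gcongr
  have hiter : ∀ j, 2 ^ j * volume (genUnion (j * m) L) ≤ volume (genUnion 0 L) := fun j => by
    induction j with
    | zero => simp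
    | succ j ih =>
      calc (2 : ℝ≥0∞) ^ (j + 1) * volume (genUnion ((j + 1) * m) L)
          = 2 ^ j * (2 * volume (genUnion (j * m + m) L)) := by
            rw [add_one_mul, pow_succ, mul_assoc]
        _ ≤ 2 ^ j * volume (genUnion (j * m) L) := by gcongr; exact hhalf _
        _ ≤ _ := ih
  calc 2 ^ (ℓ / m) * volume (genUnion ℓ L)
      ≤ 2 ^ (ℓ / m) * volume (genUnion (ℓ / m * m) L) := by
        have h := genUnion_add_subset (ℓ / m * m) (ℓ - ℓ / m * m) L
        rw [Nat.add_sub_cancel' (Nat.div_mul_le_self ℓ m)] at h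
        gcongr
    _ ≤ _ := hiter _

end GenerationUnion

theorem inv_two_pow_div_le {C : ℝ} {ℓ m : ℕ} (hm : 0 < m) (hmC : (m : ℝ) ≤ 2 * C) :
    ((2 : ℝ) ^ (ℓ / m))⁻¹ ≤ 4 * (2 : ℝ) ^ (-(2 * (ℓ : ℝ)) / (4 * C + 1)) := by
  have hm' : (0 : ℝ) < m := Nat.cast_pos.2 hm
  have hdiv : (ℓ : ℝ) < ((ℓ / m : ℕ) + 1) * m := by
    exact_mod_cast (Nat.lt_div_mul_add hm).trans_eq (add_one_mul (ℓ / m) m).symm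
  have hrate : 2 * (ℓ : ℝ) / (4 * C + 1) ≤ ℓ / m := by
    rw [div_le_div_iff₀ (by linarith) hm']
    nlinarith [(Nat.cast_nonneg ℓ : (0 : ℝ) ≤ ℓ)]
  have hexp : -((ℓ / m : ℕ) : ℝ) ≤ 2 + -(2 * (ℓ : ℝ)) / (4 * C + 1) := by
    rw [neg_div]
    have := (div_lt_iff₀ hm').2 hdiv
    linarith
  calc ((2 : ℝ) ^ (ℓ / m))⁻¹ = (2 : ℝ) ^ (-((ℓ / m : ℕ) : ℝ)) := by
        rw [Real.rpow_neg zero_le_two, Real.rpow_natCast]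
    _ ≤ (2 : ℝ) ^ (2 + -(2 * (ℓ : ℝ)) / (4 * C + 1)) :=
        Real.rpow_le_rpow_of_exponent_le one_le_two hexp
    _ = 4 * (2 : ℝ) ^ (-(2 * (ℓ : ℝ)) / (4 * C + 1)) := by
        rw [Real.rpow_add two_pos, Real.rpow_two]
        norm_num

theorem two_mul_ofReal_le_floor_two_mul_add_one (C : ℝ) :
    2 * ENNReal.ofReal C ≤ ⌊2 * C⌋₊ + 1 :=
  calc 2 * ENNReal.ofReal C = ENNReal.ofReal (2 * C) := by
        rw [ENNReal.ofReal_mul zero_le_two, ENNReal.ofReal_ofNat]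
    _ ≤ ENNReal.ofReal (⌊2 * C⌋₊ + 1) := ENNReal.ofReal_le_ofReal (Nat.lt_floor_add_one _).le
    _ = ⌊2 * C⌋₊ + 1 := by
        rw [ENNReal.ofReal_add (Nat.cast_nonneg _) zero_le_one, ENNReal.ofReal_natCast,
          ENNReal.ofReal_one]

theorem generation_decay_general (E : Set DyadicI) (C : ℝ)
    (hsum : ∀ I ∈ E, Summable fun J : {J : DyadicI // J ∈ E ∧ dySet J ⊆ dySet I} => dyLen J.1)
    (hC : ∀ I ∈ E,
      (∑' J : {J : DyadicI // J ∈ E ∧ dySet J ⊆ dySet I}, dyLen J.1) ≤ C * dyLen I)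
    (I : DyadicI) (hI : I ∈ E) (ℓ : ℕ) :
    (volume (⋃ J ∈ gen ℓ {J : DyadicI | J ∈ E ∧ dySet J ⊆ dySet I}, dySet J)).toReal ≤
      4 * (2 : ℝ) ^ (-(2 * (ℓ : ℝ)) / (4 * C + 1)) * dyLen I := by
  have hC1 : 1 ≤ C := (le_mul_iff_one_le_left (dyLen_pos I)).1 <|
    ((hsum I hI).le_tsum ⟨I, hI, subset_rfl⟩ fun J _ => (dyLen_pos J.1).le).trans (hC I hI)
  have hpack : ∀ J ∈ E, ∑' K : {K : DyadicI // K ∈ E ∧ dySet K ⊆ dySet J}, volume (dySet K.1) ≤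
      ENNReal.ofReal C * volume (dySet J) := fun J hJ =>
    tsum_volume_dySet_le_of_tsum_dyLen_le (by linarith) (hsum J hJ) (hC J hJ)
  set D := {J : DyadicI | J ∈ E ∧ dySet J ⊆ dySet I}
  set m := ⌊2 * C⌋₊
  have hm : 0 < m := Nat.floor_pos.2 (by linarith)
  have hdecay : 2 ^ (ℓ / m) * volume (genUnion ℓ D) ≤ ENNReal.ofReal (dyLen I) :=
    (two_pow_mul_volume_genUnion_le (L := D) (fun J hJ => hJ.1) (fun J hJ => hpack J hJ.1)
      (two_mul_ofReal_le_floor_two_mul_add_one C) ℓ).trans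
      ((measure_mono (genUnion_subset_dySet (fun J hJ => hJ.2) 0)).trans_eq (volume_dySet I))
  have hreal := ENNReal.toReal_mono ENNReal.ofReal_ne_top hdecay
  rw [ENNReal.toReal_mul, ENNReal.toReal_pow, ENNReal.toReal_ofNat,
    ENNReal.toReal_ofReal (dyLen_pos I).le] at hreal
  calc (volume (genUnion ℓ D)).toReal ≤ ((2 : ℝ) ^ (ℓ / m))⁻¹ * dyLen I := by
        rw [inv_mul_eq_div, le_div_iff₀' (by positivity)]
        exact hreal
    _ ≤ _ := mul_le_mul_of_nonneg_right (inv_two_pow_div_le hm (Nat.floor_le (by linarith)))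
        (dyLen_pos I).le

/-- Generation decay estimate: if `E` has Carleson constant at most `C`,
then for `I ∈ E` the `ℓ`-th generation of `{J ∈ E : J ⊆ I}` covers a set of measure at most
`4·2^{-2ℓ/(4C+1)}|I|`. -/
theorem generation_decay (E : Set DyadicI) (hE : E.Nonempty) (C : ℝ)
    (hsum : ∀ I ∈ E, Summable fun J : {J : DyadicI // J ∈ E ∧ dySet J ⊆ dySet I} => dyLen J.1)
    (hC : ∀ I ∈ E,
      (∑' J : {J : DyadicI // J ∈ E ∧ dySet J ⊆ dySet I}, dyLen J.1) ≤ C * dyLen I)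
    (I : DyadicI) (hI : I ∈ E) (ℓ : ℕ) :
    (volume (⋃ J ∈ gen ℓ {J : DyadicI | J ∈ E ∧ dySet J ⊆ dySet I}, dySet J)).toReal ≤
      4 * (2 : ℝ) ^ (-(2 * (ℓ : ℝ)) / (4 * C + 1)) * dyLen I :=
  generation_decay_general E C hsum hC I hI ℓ
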